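/- arXiv:1807.10954 — 9 statements merged into one kernel-verified Lean document; each statement's English description precedes it below -/
import Mathlib

section
/- Let φ : {0,1}^m → B(n,w) be a G-domination mapping for a domination graph G = ([m] ∪ [n], E), let i ∈ [m] be a left vertex of G, and let δ = deg(i) be its degree. Then there exists an (m−1, n−δ, w)-domination mapping; moreover, one such mapping φ' is G'-dominating, where G' is the induced subgraph of G obtained by removing the vertex i and all right vertices adjacent to i (suitably relabeled as a bipartite graph on [m−1] ∪ [n−δ]). -/
/-- Hamming weight of a binary word. -/
def wt {n : ℕ} (y : Fin n → Bool) : ℕ := (Finset.univ.filter fun j => y j = true).card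

/-- A domination graph: a bipartite graph on [m] ∪ [n] with no isolated right vertices. -/
def IsDominationGraph (m n : ℕ) (E : Finset (Fin m × Fin n)) : Prop :=
  ∀ j : Fin n, ∃ i : Fin m, (i, j) ∈ E

/-- `x` dominates `y` (with respect to the edge set `E`). -/
def Dominates {m n : ℕ} (E : Finset (Fin m × Fin n))
    (x : Fin m → Bool) (y : Fin n → Bool) : Prop :=
  ∀ e ∈ E, x e.1 = false → y e.2 = false

/-- `φ` is a `G`-domination mapping: an injective map from {0,1}^m into B(n,w) such that
for every edge (i,j) ∈ E and every x, x_i = 0 implies φ(x)_j = 0. -/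
def IsGDominating {m n : ℕ} (E : Finset (Fin m × Fin n)) (w : ℕ)
    (φ : (Fin m → Bool) → (Fin n → Bool)) : Prop :=
  Function.Injective φ ∧ (∀ x, wt (φ x) ≤ w) ∧ ∀ x : Fin m → Bool, Dominates E x (φ x)

/-- An (m,n,w)-domination mapping: G-dominating for some domination graph G. -/
def IsDominationMapping (m n w : ℕ) (φ : (Fin m → Bool) → (Fin n → Bool)) : Prop :=
  ∃ E : Finset (Fin m × Fin n), IsDominationGraph m n E ∧ IsGDominating E w φ

/-- Existence of an (m,n,w)-domination mapping. -/
def ExistsDomMap (m n w : ℕ) : Prop := ∃ φ, IsDominationMapping m n w φ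

/-- Degree of a left vertex `i`. -/
def degLeft {m n : ℕ} (E : Finset (Fin m × Fin n)) (i : Fin m) : ℕ :=
  (E.filter fun e => e.1 = i).card

/-- Shortening: from a G-domination mapping and a left vertex i of degree δ one obtains
an (m-1, n-δ, w)-domination mapping which is G'-dominating, where G' is the induced
subgraph of G obtained by removing i and all right vertices adjacent to i
(relabelled via injections f and g). -/
theorem stmt_2 {m n w : ℕ} (E : Finset (Fin m × Fin n))
    (hG : IsDominationGraph m n E)
    (φ : (Fin m → Bool) → (Fin n → Bool)) (hφ : IsGDominating E w φ)
    (i : Fin m) (δ : ℕ) (hδ : δ = degLeft E i) :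
    ∃ (f : Fin (m - 1) → Fin m) (g : Fin (n - δ) → Fin n)
      (φ' : (Fin (m - 1) → Bool) → (Fin (n - δ) → Bool)),
      Function.Injective f ∧ Function.Injective g ∧
      (∀ i', f i' ≠ i) ∧ (∀ j', (i, g j') ∉ E) ∧
      (∀ j : Fin n, (i, j) ∉ E → j ∈ Set.range g) ∧
      IsGDominating
        (Finset.univ.filter fun e : Fin (m - 1) × Fin (n - δ) => (f e.1, g e.2) ∈ E) w φ' ∧
      IsDominationMapping (m - 1) (n - δ) w φ' := by
  classical
  have hm : m - 1 + 1 = m := Nat.succ_pred_eq_of_pos i.pos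
  set ci : Fin (m - 1 + 1) := Fin.cast hm.symm i with hci
  set f : Fin (m - 1) → Fin m := fun i' => Fin.cast hm (ci.succAbove i') with hf
  have hfne : ∀ i', f i' ≠ i := by
    intro i' h
    have : ci.succAbove i' = ci := by
      apply Fin.val_injective
      simpa [hf, hci] using congrArg Fin.val h
    exact (ci.succAbove_ne i') this
  have hfinj : Function.Injective f := by
    intro a b h
    have : ci.succAbove a = ci.succAbove b := by
      apply Fin.val_injective
      simpa [hf] using congrArg Fin.val h
    exact ci.succAbove_right_injective this
  -- the set of non-neighbors of i
  set S : Finset (Fin n) := Finset.univ.filter (fun j => (i, j) ∉ E) with hSdef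
  have hcard : (Finset.univ.filter fun j : Fin n => (i, j) ∈ E).card = degLeft E i := by
    unfold degLeft
    apply Finset.card_bij' (fun j _ => (i, j)) (fun e _ => e.2)
    · intro j hj
      simp only [Finset.mem_filter, Finset.mem_univ, true_and] at hj
      exact Finset.mem_filter.mpr ⟨hj, rfl⟩
    · intro e he
      simp only [Finset.mem_filter] at he
      simp only [Finset.mem_filter, Finset.mem_univ, true_and]
      rw [← he.2]; exact he.1
    · intro j hj; rfl
    · intro e he
      simp only [Finset.mem_filter] at he
      rw [← he.2]
  have hS : S.card = n - δ := by
    have h1 := Finset.card_filter_add_card_filter_not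
      (s := (Finset.univ : Finset (Fin n))) (p := fun j => (i, j) ∈ E)
    simp only [Finset.card_univ, Fintype.card_fin] at h1
    have : (Finset.univ.filter fun j : Fin n => ¬ (i, j) ∈ E).card = n - δ := by
      omega
    simpa [hSdef] using this
  set g : Fin (n - δ) → Fin n := fun j' => (S.orderIsoOfFin hS j' : Fin n) with hg
  have hginj : Function.Injective g := by
    intro a b h
    exact (S.orderIsoOfFin hS).injective (Subtype.val_injective h)
  have hgmem : ∀ j', g j' ∈ S := fun j' => (S.orderIsoOfFin hS j').2
  have hgS : ∀ j', (i, g j') ∉ E := by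
    intro j'
    have := hgmem j'
    simp only [hSdef, Finset.mem_filter] at this
    exact this.2
  have hgsurj : ∀ j : Fin n, (i, j) ∉ E → j ∈ Set.range g := by
    intro j hj
    have hjS : j ∈ S := by simp [hSdef, hj]
    obtain ⟨j', hj'⟩ := (S.orderIsoOfFin hS).surjective ⟨j, hjS⟩
    exact ⟨j', congrArg Subtype.val hj'⟩
  -- extension of a word on [m-1] to [m] by setting coordinate i to false
  set ext : (Fin (m - 1) → Bool) → (Fin m → Bool) :=
    fun x' k => (ci.insertNth false x' : Fin (m - 1 + 1) → Bool) (Fin.cast hm.symm k) with hext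
  have hext_f : ∀ x' i', ext x' (f i') = x' i' := by
    intro x' i'
    have : Fin.cast hm.symm (f i') = ci.succAbove i' := by
      apply Fin.val_injective; simp [hf]
    simp [hext, this]
  have hext_i : ∀ x', ext x' i = false := by
    intro x'
    have : Fin.cast hm.symm i = ci := rfl
    simp [hext, this]
  set φ' : (Fin (m - 1) → Bool) → (Fin (n - δ) → Bool) :=
    fun x' j' => φ (ext x') (g j') with hφ'
  obtain ⟨hinj, hwt, hdom⟩ := hφ
  refine ⟨f, g, φ', hfinj, hginj, hfne, hgS, hgsurj, ?_, ?_⟩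
  · refine ⟨?_, ?_, ?_⟩
    · -- injectivity
      intro x' y' h
      have hfull : φ (ext x') = φ (ext y') := by
        funext j
        by_cases hj : (i, j) ∈ E
        · rw [hdom (ext x') (i, j) hj (hext_i x'),
            hdom (ext y') (i, j) hj (hext_i y')]
        · obtain ⟨j', rfl⟩ := hgsurj j hj
          exact congrFun h j'
      have hexteq := hinj hfull
      funext i'
      rw [← hext_f x' i', ← hext_f y' i', hexteq]
    · -- weight
      intro x'
      refine le_trans ?_ (hwt (ext x'))
      unfold wt
      apply Finset.card_le_card_of_injOn (fun j' => g j')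
      · intro j' hj'
        simp only [Finset.mem_coe, Finset.mem_filter, Finset.mem_univ, true_and] at hj' ⊢
        exact hj'
      · intro a _ b _ h
        exact hginj h
    · -- domination
      intro x' e he hx
      simp only [Finset.mem_filter, Finset.mem_univ, true_and] at he
      have : ext x' (f e.1) = false := by rw [hext_f]; exact hx
      exact hdom (ext x') (f e.1, g e.2) he this
  · refine ⟨Finset.univ.filter fun e : Fin (m - 1) × Fin (n - δ) => (f e.1, g e.2) ∈ E,
      ?_, ?_⟩
    · intro j'
      obtain ⟨k, hk⟩ := hG (g j')
      have hki : k ≠ i := by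
        rintro rfl; exact hgS j' hk
      have : Fin.cast hm.symm k ≠ ci := by
        intro h; apply hki; apply Fin.val_injective
        simpa [hci] using congrArg Fin.val h
      obtain ⟨i', hi'⟩ := Fin.exists_succAbove_eq this
      refine ⟨i', ?_⟩
      have hfk : f i' = k := by
        apply Fin.val_injective; simp [hf, hi']
      simp only [Finset.mem_filter, Finset.mem_univ, true_and, hfk]
      exact hk
    · refine ⟨?_, ?_, ?_⟩
      · intro x' y' h
        have hfull : φ (ext x') = φ (ext y') := by
          funext j
          by_cases hj : (i, j) ∈ E
          · rw [hdom (ext x') (i, j) hj (hext_i x'),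
              hdom (ext y') (i, j) hj (hext_i y')]
          · obtain ⟨j', rfl⟩ := hgsurj j hj
            exact congrFun h j'
        have hexteq := hinj hfull
        funext i'
        rw [← hext_f x' i', ← hext_f y' i', hexteq]
      · intro x'
        refine le_trans ?_ (hwt (ext x'))
        unfold wt
        apply Finset.card_le_card_of_injOn (fun j' => g j')
        · intro j' hj'
          simp only [Finset.mem_coe, Finset.mem_filter, Finset.mem_univ, true_and] at hj' ⊢
          exact hj'
        · intro a _ b _ h
          exact hginj h
      · intro x' e he hx
        simp only [Finset.mem_filter, Finset.mem_univ, true_and] at he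
        have : ext x' (f e.1) = false := by rw [hext_f]; exact hx
        exact hdom (ext x') (f e.1, g e.2) he this
end

section
/- Let G = ([m] ∪ [n], E) be a domination graph in which every right vertex has degree exactly one, with degree distribution (d_1, d_2, …, d_Δ). If a G-dominating mapping φ : {0,1}^m → B(n,w) exists, then for all nonnegative integers t_1, t_2, …, t_Δ with t_i ≤ d_i for i = 1,…,Δ, it holds that 2^{m − (t_1 + t_2 + ⋯ + t_Δ)} ≤ Σ_{j=0}^{w} C(n − t_1 − 2t_2 − ⋯ − Δ t_Δ, j). -/
/-- Shortening bound: for a domination graph with every right vertex of degree one,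
maximum left degree Δ and degree distribution d, if a G-dominating mapping into B(n,w)
exists then for all t with t_k ≤ d_k (1 ≤ k ≤ Δ),
2^(m - Σ t_k) ≤ Σ_{j=0}^{w} C(n - Σ k·t_k, j). -/
theorem stmt_4 {m n w : ℕ} (Δ : ℕ) (E : Finset (Fin m × Fin n))
    (hG : IsDominationGraph m n E)
    (hright : ∀ j : Fin n, (E.filter fun e => e.2 = j).card = 1)
    (hΔ : Δ = Finset.univ.sup fun i : Fin m => degLeft E i)
    (d : ℕ → ℕ)
    (hd : ∀ k, d k = (Finset.univ.filter fun i : Fin m => degLeft E i = k).card)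
    (φ : (Fin m → Bool) → (Fin n → Bool)) (hφ : IsGDominating E w φ)
    (t : ℕ → ℕ) (ht : ∀ k ∈ Finset.Icc 1 Δ, t k ≤ d k) :
    2 ^ (m - ∑ k ∈ Finset.Icc 1 Δ, t k) ≤
      ∑ j ∈ Finset.range (w + 1),
        Nat.choose (n - ∑ k ∈ Finset.Icc 1 Δ, k * t k) j := by

  classical
  obtain ⟨hinj, hwt, hdom⟩ := hφ
  -- choose for each k a set of t k left vertices of degree k
  have hexists : ∀ k : ℕ, ∃ u : Finset (Fin m),
      u ⊆ Finset.univ.filter (fun i : Fin m => degLeft E i = k) ∧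
      u.card = if k ∈ Finset.Icc 1 Δ then t k else 0 := by
    intro k
    by_cases hk : k ∈ Finset.Icc 1 Δ
    · have hle : t k ≤ (Finset.univ.filter fun i : Fin m => degLeft E i = k).card := by
        rw [← hd]; exact ht k hk
      obtain ⟨u, hu1, hu2⟩ := Finset.exists_subset_card_eq hle
      exact ⟨u, hu1, by simp [hk, hu2]⟩
    · exact ⟨∅, by simp, by simp [hk]⟩
  choose u hu hucard using hexists
  set S : Finset (Fin m) := (Finset.Icc 1 Δ).biUnion u with hS
  have hdegu : ∀ k, ∀ i ∈ u k, degLeft E i = k := by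
    intro k i hi
    have := hu k hi
    simpa using this
  have hSdisj : ∀ k1 ∈ Finset.Icc 1 Δ, ∀ k2 ∈ Finset.Icc 1 Δ, k1 ≠ k2 →
      Disjoint (u k1) (u k2) := by
    intro k1 _ k2 _ hne
    refine Finset.disjoint_left.mpr fun i h1 h2 => hne ?_
    rw [← hdegu k1 i h1, hdegu k2 i h2]
  have hScard : S.card = ∑ k ∈ Finset.Icc 1 Δ, t k := by
    rw [hS, Finset.card_biUnion hSdisj]
    refine Finset.sum_congr rfl fun k hk => ?_
    rw [hucard k, if_pos hk]
  -- the set of edges leaving S, and the corresponding right vertices T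
  set F : Finset (Fin m × Fin n) := E.filter (fun e => e.1 ∈ S) with hF
  set T : Finset (Fin n) := F.image Prod.snd with hT
  have hsnd_inj : Set.InjOn Prod.snd (F : Set (Fin m × Fin n)) := by
    intro e1 he1 e2 he2 heq
    simp only [hF, Finset.coe_filter, Set.mem_setOf_eq] at he1 he2
    have h1 : e1 ∈ E.filter (fun e => e.2 = e1.2) := Finset.mem_filter.mpr ⟨he1.1, rfl⟩
    have h2 : e2 ∈ E.filter (fun e => e.2 = e1.2) := Finset.mem_filter.mpr ⟨he2.1, heq.symm⟩
    exact Finset.card_le_one.mp (le_of_eq (hright e1.2)) e1 h1 e2 h2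
  have hTcard : T.card = ∑ k ∈ Finset.Icc 1 Δ, k * t k := by
    have h1 : T.card = F.card := Finset.card_image_of_injOn hsnd_inj
    have h2 : F = S.biUnion (fun i => E.filter (fun e => e.1 = i)) := by
      ext e
      simp only [hF, Finset.mem_filter, Finset.mem_biUnion]
      constructor
      · rintro ⟨heE, heS⟩; exact ⟨e.1, heS, heE, rfl⟩
      · rintro ⟨i, hiS, heE, hei⟩; exact ⟨heE, hei ▸ hiS⟩
    have h3 : F.card = ∑ i ∈ S, degLeft E i := by
      rw [h2, Finset.card_biUnion]
      · rfl
      · intro i1 _ i2 _ hne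
        refine Finset.disjoint_left.mpr fun e he1 he2 => hne ?_
        rw [← (Finset.mem_filter.mp he1).2, (Finset.mem_filter.mp he2).2]
    have h4 : ∑ i ∈ S, degLeft E i = ∑ k ∈ Finset.Icc 1 Δ, k * t k := by
      rw [hS, Finset.sum_biUnion]
      · refine Finset.sum_congr rfl fun k hk => ?_
        have : ∀ i ∈ u k, degLeft E i = k := hdegu k
        rw [Finset.sum_congr rfl this, Finset.sum_const, smul_eq_mul,
          hucard k, if_pos hk, mul_comm]
      · intro k1 hk1 k2 hk2 hne
        exact hSdisj k1 hk1 k2 hk2 hne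
    rw [h1, h3, h4]
  -- the set of inputs vanishing on S
  set X : Finset (Fin m → Bool) :=
    Finset.univ.filter (fun x => ∀ i ∈ S, x i = false) with hX
  -- lower bound on |X|
  have hXcard : 2 ^ (m - S.card) ≤ X.card := by
    have hcard1 : Fintype.card ((Sᶜ : Finset (Fin m)) → Bool) = 2 ^ (m - S.card) := by
      rw [Fintype.card_fun, Fintype.card_bool, Fintype.card_coe,
        Finset.card_compl, Fintype.card_fin]
    set ι : ((Sᶜ : Finset (Fin m)) → Bool) → (Fin m → Bool) :=
      fun g i => if h : i ∈ (Sᶜ : Finset (Fin m)) then g ⟨i, h⟩ else false with hι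
    have h : (Finset.univ : Finset ((Sᶜ : Finset (Fin m)) → Bool)).card ≤ X.card :=
      Finset.card_le_card_of_injOn ι
      (fun g _ => by
        simp only [hX, Finset.mem_coe, Finset.mem_filter, Finset.mem_univ, true_and]
        intro i hi
        simp [hι, Finset.mem_compl, hi])
      (by
        intro g1 _ g2 _ heq
        funext i
        have := congrFun heq i.1
        have hiS : (i : Fin m) ∉ S := Finset.mem_compl.mp i.2
        simpa [hι, Finset.mem_compl, hiS] using this)
    calc 2 ^ (m - S.card) = (Finset.univ : Finset ((Sᶜ : Finset (Fin m)) → Bool)).card := by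
          rw [Finset.card_univ, hcard1]
      _ ≤ X.card := h
  -- upper bound via supports
  set B : Finset (Finset (Fin n)) :=
    (Finset.range (w + 1)).biUnion (fun j => Finset.powersetCard j Tᶜ) with hB
  have hXB : X.card ≤ B.card := by
    refine Finset.card_le_card_of_injOn
      (fun x => Finset.univ.filter (fun j => φ x j = true)) ?_ ?_
    · intro x hx
      simp only [hX, Finset.mem_coe, Finset.mem_filter, Finset.mem_univ, true_and] at hx
      rw [hB, Finset.mem_coe, Finset.mem_biUnion]
      refine ⟨wt (φ x), Finset.mem_range.mpr (Nat.lt_succ_of_le (hwt x)), ?_⟩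
      rw [Finset.mem_powersetCard]
      constructor
      · intro j hj
        simp only [Finset.mem_filter, Finset.mem_univ, true_and] at hj
        rw [Finset.mem_compl]
        intro hjT
        rw [hT, Finset.mem_image] at hjT
        obtain ⟨e, heF, hej⟩ := hjT
        obtain ⟨heE, heS⟩ := Finset.mem_filter.mp heF
        have hx1 : x e.1 = false := hx e.1 heS
        have := hdom x e heE hx1
        rw [hej] at this
        rw [this] at hj
        exact Bool.false_ne_true hj
      · rfl
    · intro x1 hx1 x2 hx2 heq
      apply hinj
      funext j
      have heq' : Finset.univ.filter (fun j => φ x1 j = true) =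
          Finset.univ.filter (fun j => φ x2 j = true) := heq
      have h1 : (j ∈ Finset.univ.filter (fun j => φ x1 j = true)) ↔
          (j ∈ Finset.univ.filter (fun j => φ x2 j = true)) := by rw [heq']
      simp only [Finset.mem_filter, Finset.mem_univ, true_and] at h1
      cases hb1 : φ x1 j <;> cases hb2 : φ x2 j
      · rfl
      · exact absurd (h1.mpr hb2) (by simp [hb1])
      · exact absurd (h1.mp hb1) (by simp [hb2])
      · rfl
  have hBcard : B.card = ∑ j ∈ Finset.range (w + 1),
      Nat.choose (n - T.card) j := by
    rw [hB, Finset.card_biUnion]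
    · refine Finset.sum_congr rfl fun j _ => ?_
      rw [Finset.card_powersetCard, Finset.card_compl, Fintype.card_fin]
    · intro j1 _ j2 _ hne
      refine Finset.disjoint_left.mpr fun s hs1 hs2 => hne ?_
      rw [← (Finset.mem_powersetCard.mp hs1).2, (Finset.mem_powersetCard.mp hs2).2]
  calc 2 ^ (m - ∑ k ∈ Finset.Icc 1 Δ, t k) = 2 ^ (m - S.card) := by rw [hScard]
    _ ≤ X.card := hXcard
    _ ≤ B.card := hXB
    _ = ∑ j ∈ Finset.range (w + 1), Nat.choose (n - T.card) j := hBcard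
    _ = ∑ j ∈ Finset.range (w + 1),
        Nat.choose (n - ∑ k ∈ Finset.Icc 1 Δ, k * t k) j := by rw [hTcard]
end

section
/- If an (m,n,w)-domination mapping exists, then n ≥ 2m − w. -/
/-- The boolean words of length `k` supported on `S` number `2 ^ S.card`. -/
lemma card_supp {k : ℕ} (S : Finset (Fin k)) :
    Fintype.card {x : Fin k → Bool // ∀ i ∉ S, x i = false} = 2 ^ S.card := by
  have e : {x : Fin k → Bool // ∀ i ∉ S, x i = false} ≃ ({i // i ∈ S} → Bool) :=
    { toFun := fun x i => x.1 i.1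
      invFun := fun g => ⟨fun i => if h : i ∈ S then g ⟨i, h⟩ else false,
        fun i hi => by simp [hi]⟩
      left_inv := fun x => by
        ext i
        by_cases h : i ∈ S
        · simp [h]
        · simp [h, x.2 i h]
      right_inv := fun g => by ext i; simp }
  rw [Fintype.card_congr e, Fintype.card_fun]
  simp [Fintype.card_coe]

/-- If an (m,n,w)-domination mapping exists, then n ≥ 2m - w. -/
theorem stmt_5 {m n w : ℕ} (h : ExistsDomMap m n w) : 2 * m ≤ n + w := by
  obtain ⟨φ, E, hDG, hinj, hwt, hdom⟩ := h
  rcases Nat.eq_zero_or_pos m with hm | hm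
  · omega
  choose ι hι using hDG
  -- ι is surjective
  have hsurj : Function.Surjective ι := by
    intro i
    by_contra hc
    push_neg at hc
    have heq : φ (fun _ => false) = φ (fun k => decide (k = i)) := by
      funext j
      have h0 : φ (fun _ => false) j = false :=
        hdom (fun _ => false) (ι j, j) (hι j) rfl
      have h1 : φ (fun k => decide (k = i)) j = false :=
        hdom (fun k => decide (k = i)) (ι j, j) (hι j) (by simp [hc j])
      rw [h0, h1]
    have := congrFun (hinj heq) i
    simp at this
  set f : Fin m → ℕ := fun i => (Finset.univ.filter fun j => ι j = i).card with hf
  have hsum : ∑ i, f i = n := by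
    have := Finset.card_eq_sum_card_fiberwise
      (f := ι) (s := (Finset.univ : Finset (Fin n)))
      (t := (Finset.univ : Finset (Fin m))) (fun x _ => Finset.mem_univ _)
    simpa [hf] using this.symm
  have hge1 : ∀ i, 1 ≤ f i := by
    intro i
    obtain ⟨j, hj⟩ := hsurj i
    exact Finset.card_pos.mpr ⟨j, by simp [hj]⟩
  set S : Finset (Fin m) := Finset.univ.filter fun i => f i = 1 with hS
  -- fiber counting: 2m ≤ n + |S|
  have hsplit := Finset.sum_filter_add_sum_filter_not (Finset.univ : Finset (Fin m))
    (fun i => f i = 1) f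
  have hcards := Finset.card_filter_add_card_filter_not
    (s := (Finset.univ : Finset (Fin m))) (p := fun i => f i = 1)
  have hSsum : ∑ i ∈ S, f i = S.card := by
    rw [Finset.card_eq_sum_ones S]
    exact Finset.sum_congr rfl (fun i hi => by simp [hS] at hi; simp [hi])
  have h2 : ∀ i ∈ Finset.univ.filter (fun i => ¬ f i = 1), 2 ≤ f i := by
    intro i hi
    simp only [Finset.mem_filter] at hi
    have := hge1 i
    omega
  have hS2 : 2 * (Finset.univ.filter fun i => ¬ f i = 1).card ≤
      ∑ i ∈ Finset.univ.filter (fun i => ¬ f i = 1), f i := by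
    have := Finset.card_nsmul_le_sum _ f 2 h2
    simpa [mul_comm] using this
  rw [← hS] at hsplit hcards
  have hcount : 2 * m ≤ n + S.card := by
    simp only [Finset.card_univ, Fintype.card_fin] at hcards
    omega
  -- |S| ≤ w
  have hSw : S.card ≤ w := by
    by_contra hw
    push_neg at hw
    set T : Finset (Fin n) := Finset.univ.filter fun j => ι j ∈ S with hT
    have hTcard : T.card = S.card := by
      rw [Finset.card_eq_sum_card_fiberwise
        (f := ι) (s := T) (t := S) (fun j hj => by simpa [hT] using hj)]
      rw [← hSsum]
      refine Finset.sum_congr rfl (fun i hi => ?_)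
      congr 1
      ext j
      simp only [hT, Finset.mem_filter, Finset.mem_univ, true_and]
      constructor
      · rintro ⟨_, h2⟩; exact h2
      · intro h2; exact ⟨h2 ▸ hi, h2⟩
    set F : {x : Fin m → Bool // ∀ i ∉ S, x i = false} →
        {y : Fin n → Bool // ∀ j ∉ T, y j = false} :=
      fun x => ⟨φ x.1, fun j hj => by
        have hjS : ι j ∉ S := by simpa [hT] using hj
        exact hdom x.1 (ι j, j) (hι j) (x.2 _ hjS)⟩ with hF
    have hFinj : Function.Injective F := by
      intro a b hab
      have : φ a.1 = φ b.1 := congrArg Subtype.val hab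
      exact Subtype.ext (hinj this)
    have hmiss : (⟨fun j => decide (j ∈ T), fun j hj => by simp [hj]⟩ :
        {y : Fin n → Bool // ∀ j ∉ T, y j = false}) ∉ Set.range F := by
      rintro ⟨x, hx⟩
      have hxy : φ x.1 = fun j => decide (j ∈ T) := congrArg Subtype.val hx
      have : wt (φ x.1) = T.card := by
        rw [hxy]
        simp [wt]
      have := hwt x.1
      omega
    have := Fintype.card_lt_of_injective_of_notMem F hFinj hmiss
    rw [card_supp, card_supp, hTcard] at this
    omega
  omega
end

section
/- Let φ : {0,1}^m → B(n,w) be a G-dominating mapping, where G = ([m] ∪ [n], E) is a domination graph in which every right vertex has degree exactly one, with degree distribution (d_1, d_2, …, d_Δ). Then n = 2m − w if and only if d_1 = w, d_2 = m − w, and d_i = 0 for all i ≥ 3. -/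
lemma card_E {m n : ℕ} (E : Finset (Fin m × Fin n))
    (hright : ∀ j : Fin n, (E.filter fun e => e.2 = j).card = 1) : E.card = n := by
  rw [Finset.card_eq_sum_card_fiberwise (f := Prod.snd) (t := Finset.univ)
    (fun e _ => Finset.mem_univ _)]
  simp [hright]

lemma sum_deg {m n : ℕ} (E : Finset (Fin m × Fin n))
    (hright : ∀ j : Fin n, (E.filter fun e => e.2 = j).card = 1) :
    ∑ i : Fin m, degLeft E i = n := by
  unfold degLeft
  exact (Finset.card_eq_sum_card_fiberwise (f := Prod.fst) (t := Finset.univ)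
    (fun e _ => Finset.mem_univ _)).symm.trans (card_E E hright)

lemma key_count {m n w : ℕ} (E : Finset (Fin m × Fin n))
    (hright : ∀ j : Fin n, (E.filter fun e => e.2 = j).card = 1)
    (φ : (Fin m → Bool) → (Fin n → Bool)) (hφ : IsGDominating E w φ)
    (U : Finset (Fin m)) (S : Finset (Fin n))
    (hS : ∀ i ∈ U, ∀ j : Fin n, (i, j) ∈ E → j ∈ S) :
    2 ^ U.card ≤ (S.powerset.filter fun t => t.card ≤ w).card := by
  classical
  obtain ⟨hinj, hw, hdom⟩ := hφ
  rw [← Finset.card_powerset]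
  apply Finset.card_le_card_of_injOn
    (fun s => Finset.univ.filter fun j => φ (fun i => decide (i ∈ s)) j = true)
  · intro s hs
    rw [Finset.mem_coe, Finset.mem_powerset] at hs
    rw [Finset.mem_coe, Finset.mem_filter, Finset.mem_powerset]
    refine ⟨?_, hw _⟩
    intro j hj
    rw [Finset.mem_filter] at hj
    obtain ⟨-, hj⟩ := hj
    have hne : (E.filter fun e => e.2 = j).Nonempty := by
      rw [← Finset.card_pos, hright j]; norm_num
    obtain ⟨e, he⟩ := hne
    rw [Finset.mem_filter] at he
    by_cases hiU : e.1 ∈ U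
    · refine hS e.1 hiU j ?_
      rw [← he.2]
      exact he.1
    · exfalso
      have hx : (fun i => decide (i ∈ s)) e.1 = false := by
        simp only [decide_eq_false_iff_not]
        exact fun h => hiU (hs h)
      have hz := hdom (fun i => decide (i ∈ s)) e he.1 hx
      rw [he.2] at hz
      rw [hz] at hj
      exact Bool.false_ne_true hj
  · intro s hs s' hs' h
    have hφeq : φ (fun i => decide (i ∈ s)) = φ (fun i => decide (i ∈ s')) := by
      funext j
      have hj := Finset.ext_iff.mp h j
      simp only [Finset.mem_filter, Finset.mem_univ, true_and] at hj
      cases hv : φ (fun i => decide (i ∈ s)) j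
      · cases hv' : φ (fun i => decide (i ∈ s')) j
        · rfl
        · exact absurd (hj.mpr hv') (by simp [hv])
      · exact (hj.mp hv).symm
    have hx := hinj hφeq
    ext i
    have := congrFun hx i
    simpa using this

lemma S_card_le {m n : ℕ} (E : Finset (Fin m × Fin n)) (U : Finset (Fin m)) :
    (Finset.univ.filter fun j : Fin n => ∃ i ∈ U, (i, j) ∈ E).card
      ≤ ∑ i ∈ U, degLeft E i := by
  classical
  have h1 : (Finset.univ.filter fun j : Fin n => ∃ i ∈ U, (i, j) ∈ E)
      ⊆ (E.filter fun e => e.1 ∈ U).image Prod.snd := by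
    intro j hj
    rw [Finset.mem_filter] at hj
    obtain ⟨-, i, hiU, hij⟩ := hj
    exact Finset.mem_image.mpr ⟨(i, j), Finset.mem_filter.mpr ⟨hij, hiU⟩, rfl⟩
  calc (Finset.univ.filter fun j : Fin n => ∃ i ∈ U, (i, j) ∈ E).card
      ≤ ((E.filter fun e => e.1 ∈ U).image Prod.snd).card := Finset.card_le_card h1
    _ ≤ (E.filter fun e => e.1 ∈ U).card := Finset.card_image_le
    _ = ∑ i ∈ U, degLeft E i := by
        rw [Finset.card_eq_sum_card_fiberwise (s := E.filter fun e => e.1 ∈ U) (f := Prod.fst) (t := U)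
          (fun e he => (Finset.mem_filter.mp he).2)]
        apply Finset.sum_congr rfl
        intro i hi
        unfold degLeft
        congr 1
        rw [Finset.filter_filter]
        apply Finset.filter_congr
        intro e _
        constructor
        · exact And.right
        · exact fun h => ⟨by rw [h]; exact hi, h⟩

/-- For a G-dominating mapping into B(n,w), where every right vertex of G has degree one
and G has degree distribution d with maximum left degree Δ: n = 2m - w iff
d_1 = w, d_2 = m - w, and d_k = 0 for all k ≥ 3. -/
theorem stmt_6 {m n w : ℕ} (Δ : ℕ) (E : Finset (Fin m × Fin n))
    (hG : IsDominationGraph m n E)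
    (hright : ∀ j : Fin n, (E.filter fun e => e.2 = j).card = 1)
    (hΔ : Δ = Finset.univ.sup fun i : Fin m => degLeft E i)
    (d : ℕ → ℕ)
    (hd : ∀ k, d k = (Finset.univ.filter fun i : Fin m => degLeft E i = k).card)
    (φ : (Fin m → Bool) → (Fin n → Bool)) (hφ : IsGDominating E w φ) :
    n + w = 2 * m ↔ (d 1 = w ∧ d 2 = m - w ∧ ∀ k, 3 ≤ k → d k = 0) := by
  classical
  have hdegle : ∀ i, degLeft E i ≤ n := fun i =>
    le_trans (Finset.card_filter_le _ _) (le_of_eq (card_E E hright))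
  -- m as sum of fibers
  have hm : m = ∑ k ∈ Finset.range (n+3), d k := by
    simp only [hd]
    rw [← Finset.card_eq_sum_card_fiberwise (f := fun i => degLeft E i)
      (t := Finset.range (n+3)) (fun i _ => Finset.mem_range.mpr (by show degLeft E i < n + 3; have := hdegle i; omega))]
    simp
  -- n as sum of k * d k
  have hn : ∑ k ∈ Finset.range (n+3), k * d k = n := by
    simp only [hd]
    have hfib := Finset.sum_fiberwise_of_maps_to (s := Finset.univ) (g := fun i => degLeft E i)
      (t := Finset.range (n+3))
      (fun i _ => Finset.mem_range.mpr (by show degLeft E i < n + 3; have := hdegle i; omega)) (fun i => degLeft E i)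
    have hstep : ∀ k : ℕ, ∑ i ∈ Finset.univ.filter (fun i : Fin m => degLeft E i = k), degLeft E i
        = k * (Finset.univ.filter fun i : Fin m => degLeft E i = k).card := by
      intro k
      rw [Finset.sum_congr rfl (fun i hi => (Finset.mem_filter.mp hi).2),
        Finset.sum_const, smul_eq_mul, mul_comm]
    calc ∑ k ∈ Finset.range (n+3), k * (Finset.univ.filter fun i : Fin m => degLeft E i = k).card
        = ∑ k ∈ Finset.range (n+3), ∑ i ∈ Finset.univ.filter (fun i : Fin m => degLeft E i = k), degLeft E i :=
          Finset.sum_congr rfl (fun k _ => (hstep k).symm)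
      _ = ∑ i : Fin m, degLeft E i := hfib
      _ = n := sum_deg E hright
  -- splitting sums
  have hsplit : ∀ f : ℕ → ℕ, ∑ k ∈ Finset.range (n+3), f k
      = f 0 + f 1 + f 2 + ∑ k ∈ Finset.Ico 3 (n+3), f k := by
    intro f
    rw [Finset.range_eq_Ico,
      ← Finset.sum_Ico_consecutive f (by omega : 0 ≤ 3) (by omega : 3 ≤ n+3)]
    congr 1
    rw [← Finset.range_eq_Ico, Finset.sum_range_succ, Finset.sum_range_succ,
      Finset.sum_range_one]
  have hmEq : m = d 0 + d 1 + d 2 + ∑ k ∈ Finset.Ico 3 (n+3), d k := by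
    rw [hm, hsplit]
  have hnEq : d 1 + 2 * d 2 + ∑ k ∈ Finset.Ico 3 (n+3), k * d k = n := by
    have h := hsplit (fun k => k * d k)
    omega
  have hB3A : 3 * (∑ k ∈ Finset.Ico 3 (n+3), d k) ≤ ∑ k ∈ Finset.Ico 3 (n+3), k * d k := by
    rw [Finset.mul_sum]
    apply Finset.sum_le_sum
    intro k hk
    exact Nat.mul_le_mul_right _ (Finset.mem_Ico.mp hk).1
  -- d 0 = 0
  have ha0 : d 0 = 0 := by
    set U01 := Finset.univ.filter (fun i : Fin m => degLeft E i ≤ 1) with hU01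
    set S01 := Finset.univ.filter (fun j : Fin n => ∃ i ∈ U01, (i, j) ∈ E) with hS01def
    have hk01 := key_count E hright φ hφ U01 S01 (fun i hi j hij =>
      Finset.mem_filter.mpr ⟨Finset.mem_univ _, i, hi, hij⟩)
    have hS01 : S01.card ≤ ∑ i ∈ U01, degLeft E i := S_card_le E U01
    have hsum01 : ∑ i ∈ U01, degLeft E i ≤ d 1 := by
      calc ∑ i ∈ U01, degLeft E i ≤ ∑ i ∈ U01, (if degLeft E i = 1 then 1 else 0) := by
            apply Finset.sum_le_sum
            intro i hi
            have h1 : degLeft E i ≤ 1 := (Finset.mem_filter.mp hi).2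
            split <;> omega
        _ = (U01.filter fun i => degLeft E i = 1).card := by
            simp [Finset.sum_boole]
        _ ≤ d 1 := by
            rw [hd]
            apply Finset.card_le_card
            intro i hi
            rw [Finset.mem_filter] at hi ⊢
            exact ⟨Finset.mem_univ _, hi.2⟩
    have hfle : 2 ^ U01.card ≤ 2 ^ (d 1) := by
      calc 2 ^ U01.card ≤ (S01.powerset.filter fun t => t.card ≤ w).card := hk01
        _ ≤ S01.powerset.card := Finset.card_le_card (Finset.filter_subset _ _)
        _ = 2 ^ S01.card := Finset.card_powerset _
        _ ≤ 2 ^ (d 1) := Nat.pow_le_pow_right (by norm_num) (le_trans hS01 hsum01)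
    have hU01le : U01.card ≤ d 1 := by
      have := (Nat.pow_le_pow_iff_right (by norm_num : 1 < 2)).mp hfle
      exact this
    have hd01 : d 0 + d 1 ≤ U01.card := by
      rw [hd, hd]
      have hdisj : Disjoint (Finset.univ.filter fun i : Fin m => degLeft E i = 0)
          (Finset.univ.filter fun i : Fin m => degLeft E i = 1) := by
        rw [Finset.disjoint_left]
        intro i h0 h1
        have := (Finset.mem_filter.mp h0).2
        have := (Finset.mem_filter.mp h1).2
        omega
      rw [← Finset.card_union_of_disjoint hdisj]
      apply Finset.card_le_card
      intro i hi
      rw [Finset.mem_union, Finset.mem_filter, Finset.mem_filter] at hi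
      rw [Finset.mem_filter]
      exact ⟨Finset.mem_univ _, by rcases hi with h | h <;> omega⟩
    omega
  -- d 1 ≤ w
  have ha1w : d 1 ≤ w := by
    by_contra hlt
    push_neg at hlt
    set U1 := Finset.univ.filter (fun i : Fin m => degLeft E i = 1) with hU1
    set S1 := Finset.univ.filter (fun j : Fin n => ∃ i ∈ U1, (i, j) ∈ E) with hS1def
    have hk1 := key_count E hright φ hφ U1 S1 (fun i hi j hij =>
      Finset.mem_filter.mpr ⟨Finset.mem_univ _, i, hi, hij⟩)
    have hU1card : U1.card = d 1 := by rw [hd]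
    have hS1 : S1.card ≤ d 1 := by
      refine le_trans (S_card_le E U1) ?_
      calc ∑ i ∈ U1, degLeft E i = ∑ i ∈ U1, 1 :=
            Finset.sum_congr rfl (fun i hi => (Finset.mem_filter.mp hi).2)
        _ = U1.card := by rw [Finset.sum_const, smul_eq_mul, mul_one]
        _ = d 1 := hU1card
        _ ≤ d 1 := le_rfl
    rw [hU1card] at hk1
    have hfc : (S1.powerset.filter fun t => t.card ≤ w).card < 2 ^ (d 1) := by
      by_cases hc : S1.card ≤ w
      · calc (S1.powerset.filter fun t => t.card ≤ w).card
            ≤ S1.powerset.card := Finset.card_le_card (Finset.filter_subset _ _)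
          _ = 2 ^ S1.card := Finset.card_powerset _
          _ ≤ 2 ^ w := Nat.pow_le_pow_right (by norm_num) hc
          _ < 2 ^ (d 1) := Nat.pow_lt_pow_right (by norm_num) hlt
      · push_neg at hc
        have hss : (S1.powerset.filter fun t => t.card ≤ w) ⊂ S1.powerset := by
          rw [Finset.ssubset_iff_of_subset (Finset.filter_subset _ _)]
          refine ⟨S1, Finset.mem_powerset_self _, ?_⟩
          rw [Finset.mem_filter]
          push_neg
          intro _
          omega
        calc (S1.powerset.filter fun t => t.card ≤ w).card
            < S1.powerset.card := Finset.card_lt_card hss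
          _ = 2 ^ S1.card := Finset.card_powerset _
          _ ≤ 2 ^ (d 1) := Nat.pow_le_pow_right (by norm_num) hS1
    omega
  -- d k = 0 for large k
  have hdk_big : ∀ k, n + 3 ≤ k → d k = 0 := by
    intro k hk
    rw [hd, Finset.card_eq_zero]
    apply Finset.filter_false_of_mem
    intro i _
    have := hdegle i
    omega
  constructor
  · intro hnw
    obtain ⟨hA0, h1, h2⟩ : (∑ k ∈ Finset.Ico 3 (n+3), d k = 0) ∧ d 1 = w ∧ d 2 = m - w := by
      omega
    refine ⟨h1, h2, ?_⟩
    intro k hk3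
    by_cases hkr : k < n + 3
    · exact Finset.sum_eq_zero_iff.mp hA0 k (Finset.mem_Ico.mpr ⟨hk3, hkr⟩)
    · exact hdk_big k (by omega)
  · rintro ⟨h1, h2, h3⟩
    have hA0 : ∑ k ∈ Finset.Ico 3 (n+3), d k = 0 :=
      Finset.sum_eq_zero fun k hk => h3 k (Finset.mem_Ico.mp hk).1
    have hB0 : ∑ k ∈ Finset.Ico 3 (n+3), k * d k = 0 :=
      Finset.sum_eq_zero fun k hk => by rw [h3 k (Finset.mem_Ico.mp hk).1, mul_zero]
    omega
end

section
/- If ν(m_1, w_1) ≤ n_1 and ν(m_2, w_2) ≤ n_2, then ν(m_1 + m_2, w_1 + w_2) ≤ n_1 + n_2, where ν(m,w) denotes the minimum n for which an (m,n,w)-domination mapping exists. -/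
lemma wt_sum {a b : ℕ} (f : Fin a → Bool) (g : Fin b → Bool) :
    wt (fun j : Fin (a + b) => Sum.elim f g (finSumFinEquiv.symm j)) = wt f + wt g := by
  unfold wt
  rw [← Fintype.card_subtype, ← Fintype.card_subtype, ← Fintype.card_subtype,
    ← Fintype.card_sum]
  exact Fintype.card_congr
    ((finSumFinEquiv.symm.subtypeEquiv (fun j => Iff.rfl)).trans (@Equiv.subtypeSum (Fin a) (Fin b) (fun s => Sum.elim f g s = true)))

lemma combine (m₁ w₁ n₁ m₂ w₂ n₂ : ℕ)
    (H₁ : ExistsDomMap m₁ n₁ w₁) (H₂ : ExistsDomMap m₂ n₂ w₂) :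
    ExistsDomMap (m₁ + m₂) (n₁ + n₂) (w₁ + w₂) := by
  obtain ⟨φ₁, E₁, hG₁, hinj₁, hwt₁, hdom₁⟩ := H₁
  obtain ⟨φ₂, E₂, hG₂, hinj₂, hwt₂, hdom₂⟩ := H₂
  set eM := (finSumFinEquiv : Fin m₁ ⊕ Fin m₂ ≃ Fin (m₁ + m₂))
  set eN := (finSumFinEquiv : Fin n₁ ⊕ Fin n₂ ≃ Fin (n₁ + n₂))
  set L : (Fin (m₁ + m₂) → Bool) → (Fin m₁ → Bool) :=
    fun x i => x (eM (Sum.inl i)) with hL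
  set R : (Fin (m₁ + m₂) → Bool) → (Fin m₂ → Bool) :=
    fun x i => x (eM (Sum.inr i)) with hR
  refine ⟨fun x j => Sum.elim (φ₁ (L x)) (φ₂ (R x)) (eN.symm j),
    (E₁.image fun e => (eM (Sum.inl e.1), eN (Sum.inl e.2))) ∪
    (E₂.image fun e => (eM (Sum.inr e.1), eN (Sum.inr e.2))), ?_, ?_, ?_, ?_⟩
  · intro j
    rcases hj : eN.symm j with j₁ | j₂
    · obtain ⟨i₁, hi₁⟩ := hG₁ j₁
      refine ⟨eM (Sum.inl i₁), Finset.mem_union_left _ ?_⟩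
      have : j = eN (Sum.inl j₁) := by rw [← hj, Equiv.apply_symm_apply]
      rw [this]
      exact Finset.mem_image_of_mem _ hi₁
    · obtain ⟨i₂, hi₂⟩ := hG₂ j₂
      refine ⟨eM (Sum.inr i₂), Finset.mem_union_right _ ?_⟩
      have : j = eN (Sum.inr j₂) := by rw [← hj, Equiv.apply_symm_apply]
      rw [this]
      exact Finset.mem_image_of_mem _ hi₂
  · intro x y hxy
    have hL' : φ₁ (L x) = φ₁ (L y) := by
      funext j₁
      have := congrFun hxy (eN (Sum.inl j₁))
      simpa using this
    have hR' : φ₂ (R x) = φ₂ (R y) := by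
      funext j₂
      have := congrFun hxy (eN (Sum.inr j₂))
      simpa using this
    have hLxy := hinj₁ hL'
    have hRxy := hinj₂ hR'
    funext i
    rcases hi : eM.symm i with i₁ | i₂
    · have hii : i = eM (Sum.inl i₁) := by rw [← hi, Equiv.apply_symm_apply]
      rw [hii]; exact congrFun hLxy i₁
    · have hii : i = eM (Sum.inr i₂) := by rw [← hi, Equiv.apply_symm_apply]
      rw [hii]; exact congrFun hRxy i₂
  · intro x
    rw [wt_sum]
    exact Nat.add_le_add (hwt₁ (L x)) (hwt₂ (R x))
  · intro x e he hx
    rcases Finset.mem_union.mp he with he | he <;>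
      obtain ⟨e', he', rfl⟩ := Finset.mem_image.mp he
    · simpa using hdom₁ (L x) e' he' (by simpa [L] using hx)
    · simpa using hdom₂ (R x) e' he' (by simpa [R] using hx)

/-- If ν(m₁,w₁) ≤ n₁ and ν(m₂,w₂) ≤ n₂ then ν(m₁+m₂, w₁+w₂) ≤ n₁+n₂, where
ν(m,w) is the minimum n for which an (m,n,w)-domination mapping exists. -/
theorem stmt_10 (m₁ w₁ n₁ m₂ w₂ n₂ : ℕ)
    (hne₁ : {n : ℕ | ExistsDomMap m₁ n w₁}.Nonempty)
    (h₁ : sInf {n : ℕ | ExistsDomMap m₁ n w₁} ≤ n₁)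
    (hne₂ : {n : ℕ | ExistsDomMap m₂ n w₂}.Nonempty)
    (h₂ : sInf {n : ℕ | ExistsDomMap m₂ n w₂} ≤ n₂) :
    sInf {n : ℕ | ExistsDomMap (m₁ + m₂) n (w₁ + w₂)} ≤ n₁ + n₂ := by
  have H₁ : ExistsDomMap m₁ (sInf {n : ℕ | ExistsDomMap m₁ n w₁}) w₁ := Nat.sInf_mem hne₁
  have H₂ : ExistsDomMap m₂ (sInf {n : ℕ | ExistsDomMap m₂ n w₂}) w₂ := Nat.sInf_mem hne₂
  calc sInf {n : ℕ | ExistsDomMap (m₁ + m₂) n (w₁ + w₂)}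
      ≤ sInf {n : ℕ | ExistsDomMap m₁ n w₁} + sInf {n : ℕ | ExistsDomMap m₂ n w₂} :=
        Nat.sInf_le (combine _ _ _ _ _ _ H₁ H₂)
    _ ≤ n₁ + n₂ := Nat.add_le_add h₁ h₂
end

section
/- Let A be a real M × N matrix, let G_A be a subgroup of the group of all A-preserving permutations of [N] acting on [N], and let O = {O_1, …, O_n} be the collection of orbits of this action. Suppose x ∈ ℝ^N satisfies A x ≤ 1 (componentwise) and Σ_{i=1}^{N} x_i = λ. Then there exists an O-regular vector x* ∈ ℝ^N such that A x* ≤ 1 and Σ_{i=1}^{N} x*_i = λ. -/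
/-- The permutation matrix of `π`: `(permMat π).mulVec x = fun i => x (π i)`. -/
def permMat {N : ℕ} (π : Equiv.Perm (Fin N)) : Matrix (Fin N) (Fin N) ℝ :=
  Matrix.of fun i j => if π i = j then 1 else 0

/-- `π` is an `A`-preserving permutation of the columns of `A`:
there is a row permutation `πrow` with `P_{πrow} A P_π = A`. -/
def IsAPreserving {M N : ℕ} (A : Matrix (Fin M) (Fin N) ℝ)
    (π : Equiv.Perm (Fin N)) : Prop :=
  ∃ πrow : Equiv.Perm (Fin M), permMat πrow * A * permMat π = A

lemma permMat_one {N : ℕ} : permMat (1 : Equiv.Perm (Fin N)) = 1 := by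
  ext i j
  simp [permMat, Matrix.one_apply]
  split_ifs <;> simp_all

lemma permMat_mul {N : ℕ} (σ τ : Equiv.Perm (Fin N)) :
    permMat σ * permMat τ = permMat (τ * σ) := by
  ext i j
  rw [Matrix.mul_apply, Finset.sum_eq_single (σ i)]
  · simp [permMat]
    split_ifs <;> simp_all
  · intro k _ hk
    simp [permMat, Ne.symm hk]
  · simp

lemma permMat_mulVec {N : ℕ} (σ : Equiv.Perm (Fin N)) (x : Fin N → ℝ) :
    (permMat σ).mulVec x = fun i => x (σ i) := by
  ext i
  simp [permMat, Matrix.mulVec, dotProduct, ite_mul, Finset.sum_ite_eq]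

/-- If G_A is a subgroup of A-preserving permutations, x satisfies A x ≤ 1 and
Σ x_i = λ, then there is a vector x* which is constant on the orbits of G_A
(O-regular) with A x* ≤ 1 and Σ x*_i = λ. -/
theorem stmt_15 {M N : ℕ} (A : Matrix (Fin M) (Fin N) ℝ)
    (G : Subgroup (Equiv.Perm (Fin N)))
    (hG : ∀ π ∈ G, IsAPreserving A π)
    (x : Fin N → ℝ) (lam : ℝ)
    (hx : A.mulVec x ≤ 1) (hsum : ∑ i, x i = lam) :
    ∃ xs : Fin N → ℝ,
      (∀ π ∈ G, ∀ i : Fin N, xs (π i) = xs i) ∧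
      A.mulVec xs ≤ 1 ∧ ∑ i, xs i = lam := by
  classical
  set c : ℝ := (Fintype.card G : ℝ)⁻¹ with hc
  have hcard : (0:ℝ) < (Fintype.card G : ℝ) := by
    exact_mod_cast Fintype.card_pos
  refine ⟨fun i => c * ∑ π : G, x ((π : Equiv.Perm (Fin N)) i), ?_, ?_, ?_⟩
  · intro σ hσ i
    refine congrArg (fun t => c * t) ?_
    exact (Fintype.sum_equiv (Equiv.mulRight (⟨σ, hσ⟩ : G))
      (fun π : G => x ((π : Equiv.Perm (Fin N)) (σ i)))
      (fun π : G => x ((π : Equiv.Perm (Fin N)) i)) (fun π => rfl))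
  · -- A x* ≤ 1
    have key : ∀ π ∈ G, A.mulVec (fun i => x (π i)) ≤ 1 := by
      intro π hπ
      obtain ⟨ρ, hρ⟩ := hG π hπ
      have hid : permMat ρ⁻¹ * permMat ρ = 1 := by
        rw [permMat_mul]
        simp [permMat_one]
      have h1 : A * permMat π = permMat ρ⁻¹ * A := by
        conv_rhs => rw [← hρ]
        rw [← Matrix.mul_assoc, ← Matrix.mul_assoc, hid, Matrix.one_mul]
      have h2 : A.mulVec (fun i => x (π i)) = fun j => A.mulVec x (ρ⁻¹ j) := by
        rw [← permMat_mulVec π x, Matrix.mulVec_mulVec, h1,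
          ← Matrix.mulVec_mulVec, permMat_mulVec]
      intro j
      rw [h2]
      exact hx (ρ⁻¹ j)
    intro j
    have hmv : A.mulVec (fun i => c * ∑ π : G, x ((π : Equiv.Perm (Fin N)) i)) j
        = c * ∑ π : G, A.mulVec (fun i => x ((π : Equiv.Perm (Fin N)) i)) j := by
      simp only [Matrix.mulVec, dotProduct, Finset.mul_sum]
      rw [Finset.sum_comm]
      congr 1; ext π; congr 1; ext i; ring
    rw [hmv]
    have hsumle : ∑ π : G, A.mulVec (fun i => x ((π : Equiv.Perm (Fin N)) i)) j
        ≤ (Fintype.card G : ℝ) := by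
      calc ∑ π : G, A.mulVec (fun i => x ((π : Equiv.Perm (Fin N)) i)) j
          ≤ ∑ _π : G, (1:ℝ) := Finset.sum_le_sum (fun π _ => key π π.2 j)
        _ = (Fintype.card G : ℝ) := by simp
    calc c * ∑ π : G, A.mulVec (fun i => x ((π : Equiv.Perm (Fin N)) i)) j
        ≤ c * (Fintype.card G : ℝ) := by
          apply mul_le_mul_of_nonneg_left hsumle
          positivity
      _ = 1 := inv_mul_cancel₀ (ne_of_gt hcard)
  · rw [← Finset.mul_sum, Finset.sum_comm]
    have : ∀ π : G, ∑ i, x ((π : Equiv.Perm (Fin N)) i) = lam := by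
      intro π
      rw [← hsum]
      exact Equiv.sum_comp (π : Equiv.Perm (Fin N)) x
    rw [Finset.sum_congr rfl fun π _ => this π, Finset.sum_const,
      Finset.card_univ, nsmul_eq_mul, ← mul_assoc, hc,
      inv_mul_cancel₀ (ne_of_gt hcard), one_mul]
end

section
/- Fix a domination graph G = ([m] ∪ [n], E) and w, and consider neighborhoods in the compatibility graph: for X ⊆ {0,1}^m, N(X) is the set of y ∈ B(n,w) dominated by some x ∈ X, and X is a bad set if |X| > |N(X)|. If X ⊆ {0,1}^m is a bad set, then there exists a d-closed bad set X' ⊆ {0,1}^m with |X'| = |X|. -/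
instance {m n : ℕ} (E : Finset (Fin m × Fin n)) (x : Fin m → Bool) (y : Fin n → Bool) :
    Decidable (Dominates E x y) :=
  inferInstanceAs (Decidable (∀ e ∈ E, x e.1 = false → y e.2 = false))

/-- The neighbourhood, in the compatibility graph, of a set X ⊆ {0,1}^m:
all y ∈ B(n,w) dominated by some x ∈ X. -/
def nbhd {m n : ℕ} (E : Finset (Fin m × Fin n)) (w : ℕ)
    (X : Finset (Fin m → Bool)) : Finset (Fin n → Bool) :=
  Finset.univ.filter fun y => wt y ≤ w ∧ ∃ x ∈ X, Dominates E x y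

/-- X is a bad set if |X| > |N(X)|. -/
def Bad {m n : ℕ} (E : Finset (Fin m × Fin n)) (w : ℕ)
    (X : Finset (Fin m → Bool)) : Prop :=
  (nbhd E w X).card < X.card

/-- X is descendant-closed: u ∈ X and supp(v) ⊆ supp(u) imply v ∈ X. -/
def DClosed {m : ℕ} (X : Finset (Fin m → Bool)) : Prop :=
  ∀ u ∈ X, ∀ v : Fin m → Bool, (∀ i, v i = true → u i = true) → v ∈ X

/-- X is i-balanced: membership in X is insensitive to the first i coordinates. -/
def IBalanced {m : ℕ} (i : ℕ) (X : Finset (Fin m → Bool)) : Prop :=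
  ∀ u ∈ X, ∀ u' : Fin m → Bool, (∀ j : Fin m, i ≤ (j : ℕ) → u' j = u j) → u' ∈ X

/-- Ξ_U(V) = |N(U ∪ V)| - |N(U)|: the number of additional neighbours V adds to U. -/
def Xi {m n : ℕ} (E : Finset (Fin m × Fin n)) (w : ℕ)
    (U V : Finset (Fin m → Bool)) : ℕ :=
  (nbhd E w (U ∪ V)).card - (nbhd E w U).card


lemma dom_mono {m n : ℕ} (E : Finset (Fin m × Fin n)) {x u : Fin m → Bool}
    (h : ∀ i, x i = true → u i = true) {y : Fin n → Bool}
    (hd : Dominates E x y) : Dominates E u y := by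
  intro e he hu
  refine hd e he ?_
  cases hx : x e.1
  · rfl
  · rw [h e.1 hx] at hu; exact absurd hu (by simp)

lemma nbhd_mono {m n : ℕ} (E : Finset (Fin m × Fin n)) (w : ℕ)
    {X Y : Finset (Fin m → Bool)} (h : X ⊆ Y) : nbhd E w X ⊆ nbhd E w Y := by
  intro y hy
  simp only [nbhd, Finset.mem_filter] at *
  obtain ⟨h1, h2, x, hx, hd⟩ := hy
  exact ⟨h1, h2, x, h hx, hd⟩

lemma exists_dclosed_subset {m : ℕ} :
    ∀ N (Y : Finset (Fin m → Bool)), Y.card ≤ N → DClosed Y →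
      ∀ k, k ≤ Y.card → ∃ Z ⊆ Y, DClosed Z ∧ Z.card = k := by
  intro N
  induction N with
  | zero =>
    intro Y hc _ k hk
    have hY0 : Y = ∅ := Finset.card_eq_zero.mp (Nat.le_antisymm hc (Nat.zero_le _))
    have hk0 : k = 0 := by omega
    subst hY0; subst hk0
    exact ⟨∅, Finset.Subset.refl _, fun u hu => by simp at hu, rfl⟩
  | succ N ih =>
    intro Y hc hY k hk
    rcases eq_or_lt_of_le hk with heq | hlt
    · exact ⟨Y, Finset.Subset.refl _, hY, heq.symm⟩
    · have hne : Y.Nonempty := Finset.card_pos.mp (Nat.lt_of_le_of_lt (Nat.zero_le k) hlt)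
      obtain ⟨u, hu, hmax⟩ := Y.exists_maximal hne
      have herase : DClosed (Y.erase u) := by
        intro a ha v hva
        have haY : a ∈ Y := Finset.mem_of_mem_erase ha
        have hvY : v ∈ Y := hY a haY v hva
        refine Finset.mem_erase.mpr ⟨?_, hvY⟩
        rintro rfl
        have hle : v ≤ a := fun i => by
          cases hv : v i
          · exact Bool.false_le _
          · rw [hva i hv]
        have hnlt : ¬ v < a := fun hlt => lt_irrefl _ (lt_of_lt_of_le hlt (hmax haY hlt.le))
        have : v = a := by
          by_contra hne
          exact hnlt (lt_of_le_of_ne hle hne)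
        exact (Finset.mem_erase.mp ha).1 this.symm
      have hcard : (Y.erase u).card ≤ N := by
        have := Finset.card_erase_of_mem hu
        omega
      have hk' : k ≤ (Y.erase u).card := by
        have := Finset.card_erase_of_mem hu
        omega
      obtain ⟨Z, hZsub, hZd, hZc⟩ := ih (Y.erase u) hcard herase k hk'
      exact ⟨Z, hZsub.trans (Finset.erase_subset _ _), hZd, hZc⟩

/-- Closure lemma: every bad set gives rise to a d-closed bad set of the same size. -/
theorem stmt_16 {m n w : ℕ} (E : Finset (Fin m × Fin n))
    (hG : IsDominationGraph m n E)
    (X : Finset (Fin m → Bool)) (hX : Bad E w X) :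
    ∃ X' : Finset (Fin m → Bool), DClosed X' ∧ Bad E w X' ∧ X'.card = X.card := by
  classical
  set D : Finset (Fin m → Bool) :=
    Finset.univ.filter (fun v => ∃ u ∈ X, ∀ i, v i = true → u i = true) with hD
  have hXD : X ⊆ D := fun u hu => by
    simp only [hD, Finset.mem_filter, Finset.mem_univ, true_and]
    exact ⟨u, hu, fun i h => h⟩
  have hDd : DClosed D := by
    intro a ha v hva
    simp only [hD, Finset.mem_filter, Finset.mem_univ, true_and] at ha ⊢
    obtain ⟨u, hu, hau⟩ := ha
    exact ⟨u, hu, fun i h => hau i (hva i h)⟩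
  have hnbhd : nbhd E w D = nbhd E w X := by
    apply Finset.Subset.antisymm _ (nbhd_mono E w hXD)
    intro y hy
    simp only [nbhd, Finset.mem_filter, Finset.mem_univ, true_and] at hy ⊢
    obtain ⟨h1, x, hx, hd⟩ := hy
    simp only [hD, Finset.mem_filter, Finset.mem_univ, true_and] at hx
    obtain ⟨u, hu, hxu⟩ := hx
    exact ⟨h1, u, hu, dom_mono E hxu hd⟩
  obtain ⟨Z, hZsub, hZd, hZc⟩ :=
    exists_dclosed_subset D.card D (le_refl _) hDd X.card (Finset.card_le_card hXD)
  refine ⟨Z, hZd, ?_, hZc⟩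
  have : nbhd E w Z ⊆ nbhd E w X := hnbhd ▸ nbhd_mono E w hZsub
  have := Finset.card_le_card this
  unfold Bad at hX ⊢
  omega
end

section
/- Fix a domination graph G = ([m] ∪ [n], E) and w. For any d-closed set V ⊆ {0,1}^m, |N(V)| = Ψ(V), where Ψ(V) = Σ_{v ∈ V} Ψ(v) and Ψ(v) is the number of y ∈ N({v}) that are not in N({v'}) for any proper descendant v' ≺ v. -/
/-- Ψ(v): the number of neighbours of v that are not neighbours of any proper
descendant of v. -/
def Psi {m n : ℕ} (E : Finset (Fin m × Fin n)) (w : ℕ) (v : Fin m → Bool) : ℕ :=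
  ((nbhd E w {v}).filter fun y =>
    ∀ v' : Fin m → Bool, (∀ i, v' i = true → v i = true) → v' ≠ v →
      y ∉ nbhd E w {v'}).card


def xmin {m n : ℕ} (E : Finset (Fin m × Fin n)) (y : Fin n → Bool) : Fin m → Bool :=
  fun i => decide (∃ j, (i, j) ∈ E ∧ y j = true)

lemma dominates_iff {m n : ℕ} (E : Finset (Fin m × Fin n)) (x : Fin m → Bool)
    (y : Fin n → Bool) : Dominates E x y ↔ ∀ i, xmin E y i = true → x i = true := by
  constructor
  · intro h i hi
    rw [xmin, decide_eq_true_iff] at hi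
    obtain ⟨j, hj, hyj⟩ := hi
    by_contra hx
    simp only [Bool.not_eq_true] at hx
    have := h (i, j) hj hx
    simp [this] at hyj
  · intro h e he hx
    by_contra hy
    simp only [Bool.not_eq_false] at hy
    have h1 : xmin E y e.1 = true := by
      rw [xmin, decide_eq_true_iff]; exact ⟨e.2, he, hy⟩
    have := h e.1 h1
    simp [hx] at this

lemma desc_antisymm {m : ℕ} {a b : Fin m → Bool}
    (h1 : ∀ i, a i = true → b i = true) (h2 : ∀ i, b i = true → a i = true) : a = b := by
  funext i
  cases ha : a i with
  | true => exact (h1 i ha).symm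
  | false =>
    cases hb : b i with
    | true => exact absurd (h2 i hb) (by simp [ha])
    | false => rfl

/-- For any d-closed set V, |N(V)| = Ψ(V) = Σ_{v ∈ V} Ψ(v). -/
theorem stmt_18 {m n w : ℕ} (E : Finset (Fin m × Fin n))
    (hG : IsDominationGraph m n E)
    (V : Finset (Fin m → Bool)) (hV : DClosed V) :
    (nbhd E w V).card = ∑ v ∈ V, Psi E w v := by
  have hmem : ∀ y : Fin n → Bool, y ∈ nbhd E w V ↔ wt y ≤ w ∧ xmin E y ∈ V := by
    intro y
    simp only [nbhd, Finset.mem_filter, Finset.mem_univ, true_and]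
    constructor
    · rintro ⟨hw, x, hx, hd⟩
      exact ⟨hw, hV x hx _ ((dominates_iff E x y).1 hd)⟩
    · rintro ⟨hw, hx⟩
      exact ⟨hw, xmin E y, hx, (dominates_iff E _ y).2 fun i h => h⟩
  have hpsi : ∀ v : Fin m → Bool, Psi E w v =
      (Finset.univ.filter fun y : Fin n → Bool => wt y ≤ w ∧ xmin E y = v).card := by
    intro v
    rw [Psi]
    congr 1
    ext y
    simp only [Finset.mem_filter, Finset.mem_univ, true_and, nbhd,
      Finset.mem_singleton, exists_eq_left]
    constructor
    · rintro ⟨⟨hw, hd⟩, hmin⟩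
      refine ⟨hw, ?_⟩
      by_contra hne
      exact hmin (xmin E y) ((dominates_iff E v y).1 hd) hne
        ⟨hw, (dominates_iff E _ y).2 fun i h => h⟩
    · rintro ⟨hw, hx⟩
      subst hx
      refine ⟨⟨hw, (dominates_iff E _ y).2 fun i h => h⟩, ?_⟩
      rintro v' hdesc hne ⟨-, hd⟩
      exact hne (desc_antisymm hdesc ((dominates_iff E v' y).1 hd))
  have hset : nbhd E w V =
      V.biUnion fun v => Finset.univ.filter fun y : Fin n → Bool => wt y ≤ w ∧ xmin E y = v := by
    ext y
    rw [hmem, Finset.mem_biUnion]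
    constructor
    · rintro ⟨hw, hx⟩
      exact ⟨xmin E y, hx, by simp [hw]⟩
    · rintro ⟨v, hv, hy⟩
      simp only [Finset.mem_filter, Finset.mem_univ, true_and] at hy
      exact ⟨hy.1, hy.2 ▸ hv⟩
  rw [hset, Finset.card_biUnion]
  · exact Finset.sum_congr rfl fun v _ => (hpsi v).symm
  · intro a _ b _ hab
    rw [Function.onFun, Finset.disjoint_left]
    rintro y hy1 hy2
    simp only [Finset.mem_filter, Finset.mem_univ, true_and] at hy1 hy2
    exact hab (hy1.2 ▸ hy2.2)
end

section
/- Fix a domination graph G = ([m] ∪ [n], E) and w, let 1 ≤ i ≤ m, and let X_i be the collection of all bad subsets of {0,1}^m that are d-closed and i-balanced. Let X be a set of smallest cardinality in X_{i−1}, and define Y = {u ∈ X : u_i = 0 and u + e_i ∉ X} and Z = {u + e_i : u ∈ Y}, where e_i is the weight-one word with its single 1 in position i. If Ξ_X(Z) ≤ Ξ_{X\Y}(Y), then X ∪ Z is a d-closed, i-balanced bad set, i.e., X ∪ Z ∈ X_i. -/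
/-- Augmentation lemma: let X be a smallest bad, d-closed, (i-1)-balanced set,
Y = {u ∈ X : u_i = 0, u + e_i ∉ X} and Z = Y + e_i. If Ξ_X(Z) ≤ Ξ_{X\Y}(Y), then
X ∪ Z is a bad, d-closed, i-balanced set. -/
theorem stmt_19 {m n w : ℕ} (E : Finset (Fin m × Fin n))
    (hG : IsDominationGraph m n E)
    (i : ℕ) (hi1 : 1 ≤ i) (hi2 : i ≤ m)
    (X : Finset (Fin m → Bool))
    (hbad : Bad E w X) (hdc : DClosed X) (hbal : IBalanced (i - 1) X)
    (hmin : ∀ X' : Finset (Fin m → Bool),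
      Bad E w X' → DClosed X' → IBalanced (i - 1) X' → X.card ≤ X'.card)
    (p : Fin m) (hp : (p : ℕ) = i - 1)
    (Y Z : Finset (Fin m → Bool))
    (hYdef : Y = X.filter fun u => u p = false ∧ Function.update u p true ∉ X)
    (hZdef : Z = Y.image fun u => Function.update u p true)
    (hXi : Xi E w X Z ≤ Xi E w (X \ Y) Y) :
    Bad E w (X ∪ Z) ∧ DClosed (X ∪ Z) ∧ IBalanced i (X ∪ Z) := by

  classical
  have hYmem : ∀ u, u ∈ Y ↔ u ∈ X ∧ u p = false ∧ Function.update u p true ∉ X := by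
    intro u; rw [hYdef, Finset.mem_filter]
  have hZmem : ∀ z, z ∈ Z ↔ ∃ u ∈ Y, Function.update u p true = z := by
    intro z; rw [hZdef, Finset.mem_image]
  have hYX : Y ⊆ X := fun u hu => ((hYmem u).1 hu).1
  have hjp : ∀ j : Fin m, j ≠ p → i - 1 ≤ (j : ℕ) → i ≤ (j : ℕ) := by
    intro j hj hij
    have hne : (j : ℕ) ≠ (p : ℕ) := fun h => hj (Fin.ext h)
    omega
  have hstep : ∀ v ∈ X, v p = false → Function.update v p true ∈ X ∪ Z := by
    intro v hv hvp
    by_cases hY : v ∈ Y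
    · exact Finset.mem_union_right _ ((hZmem _).2 ⟨v, hY, rfl⟩)
    · refine Finset.mem_union_left _ ?_
      by_contra hn
      exact hY ((hYmem v).2 ⟨hv, hvp, hn⟩)
  have hXZfact : ∀ u ∈ X ∪ Z, Function.update u p false ∈ X := by
    intro u hu
    rcases Finset.mem_union.1 hu with h | h
    · refine hdc u h _ ?_
      intro j hj
      by_cases hjp' : j = p
      · subst hjp'; simp at hj
      · simpa [Function.update_apply, hjp'] using hj
    · obtain ⟨y, hy, rfl⟩ := (hZmem u).1 h
      obtain ⟨hyX, hyp, -⟩ := (hYmem y).1 hy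
      have he : Function.update (Function.update y p true) p false = y := by
        funext j
        by_cases hj : j = p
        · subst hj; simp [hyp]
        · simp [Function.update_apply, hj]
      rw [he]; exact hyX
  have hbal' : IBalanced i (X ∪ Z) := by
    intro u hu u' hag
    have hubar : Function.update u p false ∈ X := hXZfact u hu
    have hu'' : Function.update u' p false ∈ X := by
      refine hbal _ hubar _ ?_
      intro j hj
      by_cases hjp' : j = p
      · subst hjp'; simp
      · have hij : i ≤ (j : ℕ) := hjp j hjp' hj
        simp [Function.update_apply, hjp', hag j hij]
    by_cases hp' : u' p = true
    · have he : u' = Function.update (Function.update u' p false) p true := by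
        rw [Function.update_idem, ← hp']
        exact (Function.update_eq_self p u').symm
      rw [he]
      exact hstep _ hu'' (by simp)
    · have hp'' : u' p = false := by
        cases h : u' p
        · rfl
        · exact absurd h hp'
      have he : Function.update u' p false = u' := by
        rw [← hp'']; exact Function.update_eq_self p u'
      exact Finset.mem_union_left _ (he ▸ hu'')
  have hdc' : DClosed (X ∪ Z) := by
    intro u hu v hv
    have hvbar : Function.update v p false ∈ X := by
      refine hdc _ (hXZfact u hu) _ ?_
      intro j hj
      by_cases hjp' : j = p
      · subst hjp'; simp at hj
      · simp only [Function.update_apply, if_neg hjp'] at hj ⊢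
        exact hv j hj
    by_cases hp' : v p = true
    · have he : v = Function.update (Function.update v p false) p true := by
        rw [Function.update_idem, ← hp']
        exact (Function.update_eq_self p v).symm
      rw [he]
      exact hstep _ hvbar (by simp)
    · have hp'' : v p = false := by
        cases h : v p
        · rfl
        · exact absurd h hp'
      have he : Function.update v p false = v := by
        rw [← hp'']; exact Function.update_eq_self p v
      exact Finset.mem_union_left _ (he ▸ hvbar)
  have hdcXY : DClosed (X \ Y) := by
    intro u hu v hv
    obtain ⟨huX, huY⟩ := Finset.mem_sdiff.1 hu
    have hvX : v ∈ X := hdc u huX v hv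
    refine Finset.mem_sdiff.2 ⟨hvX, ?_⟩
    intro hvY
    obtain ⟨-, hvp, hvn⟩ := (hYmem v).1 hvY
    apply hvn
    by_cases hup : u p = true
    · refine hdc u huX _ ?_
      intro j hj
      by_cases hjp' : j = p
      · subst hjp'; exact hup
      · simp only [Function.update_apply, if_neg hjp'] at hj
        exact hv j hj
    · have hup' : u p = false := by
        cases h : u p
        · rfl
        · exact absurd h hup
      have huu : Function.update u p true ∈ X := by
        by_contra hn; exact huY ((hYmem u).2 ⟨huX, hup', hn⟩)
      refine hdc _ huu _ ?_
      intro j hj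
      by_cases hjp' : j = p
      · subst hjp'; simp
      · simp only [Function.update_apply, if_neg hjp'] at hj ⊢
        exact hv j hj
  have hbalXY : IBalanced (i - 1) (X \ Y) := by
    intro u hu u' hag
    obtain ⟨huX, huY⟩ := Finset.mem_sdiff.1 hu
    have hu'X : u' ∈ X := hbal u huX u' hag
    refine Finset.mem_sdiff.2 ⟨hu'X, ?_⟩
    intro hu'Y
    obtain ⟨-, hu'p, hu'n⟩ := (hYmem u').1 hu'Y
    have hpp : u' p = u p := hag p hp.ge
    have hup : u p = false := by rw [← hpp]; exact hu'p
    have huu : Function.update u p true ∈ X := by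
      by_contra hn; exact huY ((hYmem u).2 ⟨huX, hup, hn⟩)
    apply hu'n
    refine hbal _ huu _ ?_
    intro j hj
    by_cases hjp' : j = p
    · subst hjp'; simp
    · simp only [Function.update_apply, if_neg hjp']
      exact hag j hj
  have hZcard : Z.card = Y.card := by
    rw [hZdef]
    apply Finset.card_image_of_injOn
    intro u hu v hv h
    obtain ⟨-, hup, -⟩ := (hYmem u).1 (Finset.mem_coe.1 hu)
    obtain ⟨-, hvp, -⟩ := (hYmem v).1 (Finset.mem_coe.1 hv)
    funext j
    by_cases hjp' : j = p
    · subst hjp'; rw [hup, hvp]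
    · have hc := congrFun h j
      simpa [Function.update_apply, hjp'] using hc
  have hdisj : Disjoint X Z := by
    rw [Finset.disjoint_right]
    intro z hz hzX
    obtain ⟨u, hu, rfl⟩ := (hZmem z).1 hz
    exact ((hYmem u).1 hu).2.2 hzX
  have hcard : (X ∪ Z).card = X.card + Y.card := by
    rw [Finset.card_union_of_disjoint hdisj, hZcard]
  have hmono : ∀ U V : Finset (Fin m → Bool), U ⊆ V → nbhd E w U ⊆ nbhd E w V := by
    intro U V hUV y hy
    simp only [nbhd, Finset.mem_filter, Finset.mem_univ, true_and] at hy ⊢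
    obtain ⟨hw', x, hx, hd⟩ := hy
    exact ⟨hw', x, hUV hx, hd⟩
  have hBad : Bad E w (X ∪ Z) := by
    by_cases hXY : Bad E w (X \ Y)
    · have h1 : X.card ≤ (X \ Y).card := hmin _ hXY hdcXY hbalXY
      have h2 : (X \ Y).card = X.card - Y.card := Finset.card_sdiff_of_subset hYX
      have h3 : Y.card ≤ X.card := Finset.card_le_card hYX
      have h4 : Y.card = 0 := by omega
      have h5 : Y = ∅ := Finset.card_eq_zero.1 h4
      have h6 : Z = ∅ := by rw [hZdef, h5, Finset.image_empty]
      rw [h6, Finset.union_empty]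
      exact hbad
    · have hXYc' : ¬ (nbhd E w (X \ Y)).card < (X \ Y).card := hXY
      have hXYc : (X \ Y).card ≤ (nbhd E w (X \ Y)).card := le_of_not_gt hXYc'
      have hXi' : (nbhd E w (X ∪ Z)).card - (nbhd E w X).card ≤
          (nbhd E w ((X \ Y) ∪ Y)).card - (nbhd E w (X \ Y)).card := hXi
      rw [Finset.sdiff_union_of_subset hYX] at hXi'
      have hba : (nbhd E w X).card ≤ (nbhd E w (X ∪ Z)).card :=
        Finset.card_le_card (hmono _ _ Finset.subset_union_left)
      have hcbn : (nbhd E w (X \ Y)).card ≤ (nbhd E w X).card :=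
        Finset.card_le_card (hmono _ _ Finset.sdiff_subset)
      have h2 : (X \ Y).card = X.card - Y.card := Finset.card_sdiff_of_subset hYX
      have h3 : Y.card ≤ X.card := Finset.card_le_card hYX
      have hb : (nbhd E w X).card < X.card := hbad
      show (nbhd E w (X ∪ Z)).card < (X ∪ Z).card
      rw [hcard]
      omega
  exact ⟨hBad, hdc', hbal'⟩
end
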